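/- arXiv:2501.00166 — 3 statements merged into one kernel-verified Lean document; each statement's English description precedes it below -/
import Mathlib

section
/- Let X and Y be locally compact Hausdorff spaces, A a topological abelian group, and π : X → Y a local homeomorphism. For f ∈ C_c(X, A), the assignment π_*(f)(y) = Σ_{x : π(x)=y} f(x) is a well-defined element of C_c(Y, A), and π_* : C_c(X,A) → C_c(Y,A) is a group homomorphism. -/
open scoped CompactlySupported
set_option linter.unusedSectionVars false
open Set Function

section Aux

variable {X Y A : Type*} [TopologicalSpace X] [TopologicalSpace Y]

lemma aux_fiber_finite (π : X → Y) (hπ : IsLocalHomeomorph π) {K : Set X}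
    (hK : IsCompact K) (y : Y) : (K ∩ π ⁻¹' {y}).Finite := by
  choose e he hee using hπ
  obtain ⟨t, -, ht⟩ := hK.elim_nhds_subcover (fun x => (e x).source)
    (fun x _ => (e x).open_source.mem_nhds (he x))
  have hsub : K ∩ π ⁻¹' {y} ⊆ ⋃ x ∈ t, ((e x).source ∩ π ⁻¹' {y}) := by
    rintro a ⟨haK, hay⟩
    obtain ⟨x, hxt, hax⟩ := Set.mem_iUnion₂.1 (ht haK)
    exact Set.mem_iUnion₂.2 ⟨x, hxt, hax, hay⟩
  refine (Set.Finite.biUnion t.finite_toSet fun x _ => ?_).subset hsub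
  refine Set.Subsingleton.finite fun p hp q hq => ?_
  exact (e x).injOn hp.1 hq.1 (by have h1 : π p = y := hp.2; have h2 : π q = y := hq.2; simp only [← hee x]; rw [h1, h2])

variable [T2Space X] [T2Space Y] [AddCommGroup A] [TopologicalSpace A] [IsTopologicalAddGroup A]

lemma aux_continuous (π : X → Y) (hπ : IsLocalHomeomorph π)
    (f : X → A) (hf : Continuous f) (hfs : HasCompactSupport f) :
    Continuous fun y => ∑ᶠ x ∈ π ⁻¹' {y}, f x := by
  rw [continuous_iff_continuousAt]
  intro y₀
  have hK : IsCompact (tsupport f) := hfs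
  have hSfin : (tsupport f ∩ π ⁻¹' {y₀}).Finite := aux_fiber_finite π hπ hK y₀
  obtain ⟨D, hD, hDdisj⟩ := hSfin.t2_separation
  have hπc : Continuous π := hπ.continuous
  classical
  choose e he hee using hπ
  set ε : X → OpenPartialHomeomorph X Y := fun x => (e x).restrOpen (D x) (hD x).2 with hεdef
  have hεcoe : ∀ x, ⇑(ε x) = π := fun x => (hee x).symm
  have hεsrc : ∀ x, (ε x).source = (e x).source ∩ D x := fun x =>
    (e x).restrOpen_source (D x) (hD x).2
  set S : Finset X := hSfin.toFinset with hSdef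
  have hmemS : ∀ x ∈ S, x ∈ tsupport f ∩ π ⁻¹' {y₀} := fun x hx => hSfin.mem_toFinset.1 hx
  have hxsrc : ∀ x, x ∈ (ε x).source := fun x => (hεsrc x) ▸ ⟨he x, (hD x).1⟩
  set U : Set X := ⋃ x ∈ S, (ε x).source with hUdef
  have hUopen : IsOpen U := isOpen_biUnion fun x _ => (ε x).open_source
  set W : Set Y := (⋂ x ∈ S, (ε x).target) \ π '' (tsupport f \ U) with hWdef
  have hWopen : IsOpen W :=
    (isOpen_biInter_finset fun x _ => (ε x).open_target).sdiff
      ((hK.diff hUopen).image hπc).isClosed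
  have hy₀W : y₀ ∈ W := by
    constructor
    · refine Set.mem_iInter₂.2 fun x hx => ?_
      have := (ε x).map_source (hxsrc x)
      rwa [hεcoe x, (hmemS x hx).2] at this
    · rintro ⟨x, ⟨hxK, hxU⟩, hπx⟩
      exact hxU (Set.mem_biUnion (hSfin.mem_toFinset.2 ⟨hxK, hπx⟩) (hxsrc x))
  have hWtarget : ∀ x ∈ S, W ⊆ (ε x).target := fun x hx y hy =>
    (Set.mem_iInter₂.1 hy.1) x hx
  -- key formula on W
  have key : ∀ y ∈ W, (∑ᶠ x ∈ π ⁻¹' {y}, f x) = ∑ x ∈ S, f ((ε x).symm y) := by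
    intro y hy
    have hsymm_mem : ∀ x ∈ S, (ε x).symm y ∈ (ε x).source := fun x hx =>
      (ε x).map_target (hWtarget x hx hy)
    have hinj : Set.InjOn (fun x => (ε x).symm y) S := by
      intro a ha b hb hab
      by_contra hne
      have h1 : (ε a).symm y ∈ D a := ((hεsrc a) ▸ hsymm_mem a ha).2
      have hab' : (ε a).symm y = (ε b).symm y := hab
      have h2 : (ε a).symm y ∈ D b := by rw [hab']; exact ((hεsrc b) ▸ hsymm_mem b hb).2
      exact (hDdisj (hmemS a ha) (hmemS b hb) hne).le_bot ⟨h1, h2⟩ 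
    rw [finsum_mem_eq_sum_of_inter_support_eq f
      (t := S.image fun x => (ε x).symm y) ?_, Finset.sum_image fun a ha b hb h => hinj ha hb h]
    ext x
    simp only [Set.mem_inter_iff, Set.mem_preimage, Set.mem_singleton_iff, Finset.coe_image,
      Set.mem_image, Finset.mem_coe]
    constructor
    · rintro ⟨hπx, hfx⟩
      refine ⟨?_, hfx⟩
      have hxK : x ∈ tsupport f := subset_tsupport f hfx
      have hxU : x ∈ U := by
        by_contra hxU
        exact hy.2 ⟨x, ⟨hxK, hxU⟩, hπx⟩
      obtain ⟨a, haS, hax⟩ := Set.mem_iUnion₂.1 hxU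
      refine ⟨a, haS, ?_⟩
      have : (ε a) x = y := by rw [hεcoe a]; exact hπx
      rw [← this, (ε a).left_inv hax]
    · rintro ⟨⟨a, haS, rfl⟩, hfx⟩
      refine ⟨?_, hfx⟩
      have : π ((ε a).symm y) = (ε a) ((ε a).symm y) := by rw [hεcoe a]
      rw [this, (ε a).right_inv (hWtarget a haS hy)]
  have hcont : ContinuousOn (fun y => ∑ x ∈ S, f ((ε x).symm y)) W := by
    refine continuousOn_finset_sum S fun x hx => ?_
    exact hf.comp_continuousOn ((ε x).continuousOn_symm.mono (hWtarget x hx))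
  exact (hcont.continuousAt (hWopen.mem_nhds hy₀W)).congr
    (Filter.eventuallyEq_of_mem (hWopen.mem_nhds hy₀W) fun y hy => (key y hy).symm)


lemma aux_supp_finite (π : X → Y) (hπ : IsLocalHomeomorph π)
    (f : C_c(X, A)) (y : Y) : (Function.support f ∩ π ⁻¹' {y}).Finite :=
  ((aux_fiber_finite π hπ f.hasCompactSupport' y).subset
    (Set.inter_subset_inter_left _ (subset_tsupport _)))

noncomputable def auxPush (π : X → Y) (hπ : IsLocalHomeomorph π) (f : C_c(X, A)) :
    C_c(Y, A) where
  toFun := fun y => ∑ᶠ x ∈ π ⁻¹' {y}, f x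
  continuous_toFun := aux_continuous π hπ f f.continuous f.hasCompactSupport'
  hasCompactSupport' := by
    refine HasCompactSupport.intro (f.hasCompactSupport'.image hπ.continuous)
      fun y hy => ?_
    refine finsum_mem_of_eqOn_zero fun x hx => ?_
    by_contra hfx
    exact hy ⟨x, subset_tsupport _ hfx, hx⟩

@[simp] lemma auxPush_apply (π : X → Y) (hπ : IsLocalHomeomorph π) (f : C_c(X, A)) (y : Y) :
    auxPush π hπ f y = ∑ᶠ x ∈ π ⁻¹' {y}, f x := rfl

end Aux

/-- Let `X` and `Y` be locally compact Hausdorff spaces, `A` a topological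
abelian group, and `π : X → Y` a local homeomorphism.  For every `f ∈ C_c(X, A)` the fibers of
`π` meet the support of `f` in a finite set, the assignment
`π_*(f)(y) = Σ_{x : π(x) = y} f(x)` is a well-defined element of `C_c(Y, A)`, and
`π_* : C_c(X, A) → C_c(Y, A)` is a group homomorphism. -/
theorem statement0 {X Y A : Type*}
    [TopologicalSpace X] [LocallyCompactSpace X] [T2Space X]
    [TopologicalSpace Y] [LocallyCompactSpace Y] [T2Space Y]
    [AddCommGroup A] [TopologicalSpace A] [IsTopologicalAddGroup A]
    (π : X → Y) (hπ : IsLocalHomeomorph π) :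
    ∃ πstar : C_c(X, A) →+ C_c(Y, A),
      ∀ f : C_c(X, A),
        (∀ y : Y, (Function.support f ∩ π ⁻¹' {y}).Finite) ∧
        (∀ y : Y, πstar f y = ∑ᶠ x ∈ π ⁻¹' {y}, f x) := by
  refine ⟨AddMonoidHom.mk' (auxPush π hπ) ?_, fun f => ⟨aux_supp_finite π hπ f, fun y => rfl⟩⟩
  intro f g
  ext y
  have hfin : ∀ h : C_c(X, A), (π ⁻¹' {y} ∩ Function.support h).Finite := fun h =>
    ((aux_fiber_finite π hπ h.hasCompactSupport' y).subset
      (fun x hx => ⟨subset_tsupport _ hx.2, hx.1⟩))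
  simp only [auxPush_apply, CompactlySupportedContinuousMap.coe_add, Pi.add_apply]
  have : ∀ x, (f + g) x = f x + g x := fun x => rfl
  calc (∑ᶠ x ∈ π ⁻¹' {y}, (f + g) x) = ∑ᶠ x ∈ π ⁻¹' {y}, (f x + g x) :=
        finsum_mem_congr rfl fun x _ => rfl
    _ = (∑ᶠ x ∈ π ⁻¹' {y}, f x) + ∑ᶠ x ∈ π ⁻¹' {y}, g x :=
        finsum_mem_add_distrib' (hfin f) (hfin g)
end

section
/- Let G be an ample groupoid and p : Y → G^(0) an étale G-space. Let Z[Y]^s be the G-sheaf over G^(0) whose stalk at x is the free abelian group Z[Y_x] on the fiber Y_x = p^{-1}(x). Then the map Φ : Z[Y] → Γ_c(Z[Y]^s) defined by Φ(m)(x) = Σ_{p(y)=x} m(y)[y] is an isomorphism of Z[G]-modules, with inverse sending a section ξ with ξ(x) = Σ a_y [y] to the function y ↦ a_y. -/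
open scoped CompactlySupported

/-- A topological groupoid with unit space `X` and arrow space `G`.  Composability of a pair
`(g, h)` means `s g = r h`, and multiplication is only defined on composable pairs. -/
structure TopGroupoid (X G : Type*) [TopologicalSpace X] [TopologicalSpace G] where
  s : G → X
  r : G → X
  continuous_s : Continuous s
  continuous_r : Continuous r
  unit : X → G
  continuous_unit : Continuous unit
  embedding_unit : Topology.IsEmbedding unit
  mul : (g h : G) → s g = r h → G
  continuous_mul : Continuous fun p : {p : G × G // s p.1 = r p.2} => mul p.1.1 p.1.2 p.2
  inv : G → G
  continuous_inv : Continuous inv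
  s_unit : ∀ x, s (unit x) = x
  r_unit : ∀ x, r (unit x) = x
  s_mul : ∀ g h hc, s (mul g h hc) = s h
  r_mul : ∀ g h hc, r (mul g h hc) = r g
  unit_mul : ∀ g (hc : s (unit (r g)) = r g), mul (unit (r g)) g hc = g
  mul_unit : ∀ g (hc : s g = r (unit (s g))), mul g (unit (s g)) hc = g
  s_inv : ∀ g, s (inv g) = r g
  r_inv : ∀ g, r (inv g) = s g
  inv_mul : ∀ g (hc : s (inv g) = r g), mul (inv g) g hc = unit (s g)
  mul_inv : ∀ g (hc : s g = r (inv g)), mul g (inv g) hc = unit (r g)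
  mul_assoc : ∀ g h k (hgh : s g = r h) (hhk : s h = r k),
    mul (mul g h hgh) k ((s_mul g h hgh).trans hhk) =
      mul g (mul h k hhk) (hgh.trans (r_mul h k hhk).symm)

namespace TopGroupoid

variable {X G : Type*} [TopologicalSpace X] [TopologicalSpace G]

/-- An étale groupoid: the source and range maps are local homeomorphisms. -/
def IsEtale (Gr : TopGroupoid X G) : Prop :=
  IsLocalHomeomorph Gr.s ∧ IsLocalHomeomorph Gr.r

/-- An ample groupoid: an étale groupoid whose (Hausdorff, locally compact) unit space is
totally disconnected. -/
def IsAmple (Gr : TopGroupoid X G) : Prop :=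
  Gr.IsEtale ∧ TotallyDisconnectedSpace X

/-- The space `G^(n)` of composable strings of `n` arrows, for `n ≥ 1`, topologized as a
subspace of the product `G^n`. -/
def Str (Gr : TopGroupoid X G) (n : ℕ) : Type _ :=
  {g : Fin n → G // ∀ (i : ℕ) (h : i + 1 < n),
    Gr.s (g ⟨i, Nat.lt_of_succ_lt h⟩) = Gr.r (g ⟨i + 1, h⟩)}

instance (Gr : TopGroupoid X G) (n : ℕ) : TopologicalSpace (Gr.Str n) :=
  inferInstanceAs (TopologicalSpace {g : Fin n → G // ∀ (i : ℕ) (h : i + 1 < n),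
    Gr.s (g ⟨i, Nat.lt_of_succ_lt h⟩) = Gr.r (g ⟨i + 1, h⟩)})

/-- `FaceSpec Gr n i F` asserts that `F : G^(n) → G^(n-1)` is the `i`-th face map
`∂_i^n` of the bar construction (`0 ≤ i ≤ n`, `2 ≤ n`): `∂_0` deletes the first arrow, `∂_n`
deletes the last arrow, and `∂_i` for `1 ≤ i ≤ n-1` multiplies the `i`-th and `(i+1)`-st
arrows (in one-based labelling `(g_1, …, g_n)`). -/
def FaceSpec (Gr : TopGroupoid X G) (n i : ℕ) (F : Gr.Str n → Gr.Str (n - 1)) : Prop :=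
  ∀ (g : Gr.Str n) (j : Fin (n - 1)),
    (i = 0 → (F g).1 j = g.1 ⟨j.1 + 1, by omega⟩) ∧
    (1 ≤ i → i ≤ n - 1 →
      ((j.1 + 1 < i → (F g).1 j = g.1 ⟨j.1, by omega⟩) ∧
       (j.1 + 1 = i → (F g).1 j =
          Gr.mul (g.1 ⟨j.1, by omega⟩) (g.1 ⟨j.1 + 1, by omega⟩) (g.2 j.1 (by omega))) ∧
       (i < j.1 + 1 → (F g).1 j = g.1 ⟨j.1 + 1, by omega⟩))) ∧
    (i = n → (F g).1 j = g.1 ⟨j.1, by omega⟩)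

end TopGroupoid

namespace TopGroupoid

variable {X G : Type*} [TopologicalSpace X] [TopologicalSpace G]

/-- A (left) action of the topological groupoid `Gr` on a space `Y`, with anchor map `p`. -/
structure GSpace (Gr : TopGroupoid X G) (Y : Type*) [TopologicalSpace Y] where
  p : Y → X
  continuous_p : Continuous p
  surjective_p : Function.Surjective p
  act : (g : G) → (y : Y) → Gr.s g = p y → Y
  continuous_act :
    Continuous fun q : {q : G × Y // Gr.s q.1 = p q.2} => act q.1.1 q.1.2 q.2
  p_act : ∀ g y h, p (act g y h) = Gr.r g
  act_act : ∀ g₁ g₂ y (h₂ : Gr.s g₂ = p y) (h₁ : Gr.s g₁ = Gr.r g₂),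
    act g₁ (act g₂ y h₂) (h₁.trans (p_act g₂ y h₂).symm) =
      act (Gr.mul g₁ g₂ h₁) y ((Gr.s_mul g₁ g₂ h₁).trans h₂)
  unit_act : ∀ y (h : Gr.s (Gr.unit (p y)) = p y), act (Gr.unit (p y)) y h = y

/-- An étale `G`-space (a `G`-sheaf of sets): the anchor map is a local homeomorphism. -/
def GSpace.IsEtaleSpace {Gr : TopGroupoid X G} {Y : Type*} [TopologicalSpace Y]
    (Sp : Gr.GSpace Y) : Prop :=
  IsLocalHomeomorph Sp.p

/-- `ConvSpec Gr mul` asserts that `mul` is the convolution product on `ℤ[G] = C_c(G, ℤ)`. -/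
def ConvSpec (Gr : TopGroupoid X G) (mul : C_c(G, ℤ) → C_c(G, ℤ) → C_c(G, ℤ)) : Prop :=
  ∀ (f₁ f₂ : C_c(G, ℤ)) (g : G),
    mul f₁ f₂ g = ∑ᶠ h : {h : G // Gr.s h = Gr.r g}, f₁ (Gr.inv h.1) * f₂ (Gr.mul h.1 g h.2)

/-- `SmulSpec Sp smul` asserts that `smul` is the canonical `ℤ[G]`-action on `ℤ[Y] = C_c(Y, ℤ)`
for an étale `G`-space `Y`:  `(f · m)(x) = Σ_{g ∈ G_{p(x)}} f(g⁻¹) m(g · x)`. -/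
def GSpace.SmulSpec {Gr : TopGroupoid X G} {Y : Type*} [TopologicalSpace Y]
    (Sp : Gr.GSpace Y) (smul : C_c(G, ℤ) → C_c(Y, ℤ) → C_c(Y, ℤ)) : Prop :=
  ∀ (f : C_c(G, ℤ)) (m : C_c(Y, ℤ)) (x : Y),
    smul f m x =
      ∑ᶠ g : {g : G // Gr.s g = Sp.p x}, f (Gr.inv g.1) * m (Sp.act g.1 x g.2)

end TopGroupoid

namespace TopGroupoid

open scoped Classical

variable {X G : Type*} [TopologicalSpace X] [TopologicalSpace G]

/-- A compactly supported continuous section of the `G`-sheaf `ℤ[Y]^s` associated to an étale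
`G`-space `p : Y → G^(0)`:  the stalk at `x` is the free abelian group `ℤ[Y_x]` on the fiber
`Y_x = p⁻¹(x)` (realized inside `Y →₀ ℤ`), and continuity for the germ topology means that the
section is locally a finite `ℤ`-linear combination of the basic sections determined by compact
open slices of `Y`. -/
def FreeSection {Y : Type*} [TopologicalSpace Y] {Gr : TopGroupoid X G}
    (Sp : Gr.GSpace Y) (ξ : X → (Y →₀ ℤ)) : Prop :=
  (∀ x, ∀ y ∈ (ξ x).support, Sp.p y = x) ∧
  (∀ x : X, ∃ U : Set X, IsOpen U ∧ x ∈ U ∧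
    ∃ (k : ℕ) (V : Fin k → Set Y) (a : Fin k → ℤ) (σ : Fin k → X → Y),
      (∀ i, IsCompact (V i) ∧ IsOpen (V i) ∧ Set.InjOn Sp.p (V i) ∧ U ⊆ Sp.p '' V i) ∧
      (∀ i, ∀ x' ∈ U, σ i x' ∈ V i ∧ Sp.p (σ i x') = x') ∧
      (∀ x' ∈ U, ξ x' = ∑ i, a i • Finsupp.single (σ i x') 1)) ∧
  (∃ K : Set X, IsCompact K ∧ ∀ x ∉ K, ξ x = 0)

end TopGroupoid

open TopGroupoid
open scoped Classical

section AuxLemmas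

variable {X G Y : Type*} [TopologicalSpace X] [TopologicalSpace G] [TopologicalSpace Y]

theorem TopGroupoid.mul_congr (Gr : TopGroupoid X G) {a a' b b' : G} (ha : a = a')
    (hb : b = b') (h : Gr.s a = Gr.r b) (h' : Gr.s a' = Gr.r b') :
    Gr.mul a b h = Gr.mul a' b' h' := by subst ha; subst hb; rfl

theorem TopGroupoid.inv_inv (Gr : TopGroupoid X G) (g : G) : Gr.inv (Gr.inv g) = g := by
  have h1 : Gr.s (Gr.inv (Gr.inv g)) = Gr.s g := by rw [Gr.s_inv, Gr.r_inv]
  have e1 := Gr.mul_unit (Gr.inv (Gr.inv g)) (by rw [Gr.r_unit])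
  have e2 : Gr.unit (Gr.s (Gr.inv (Gr.inv g))) = Gr.mul (Gr.inv g) g (Gr.s_inv g) := by
    rw [h1]; exact (Gr.inv_mul g (Gr.s_inv g)).symm
  have hc1 : Gr.s (Gr.inv (Gr.inv g)) = Gr.r (Gr.mul (Gr.inv g) g (Gr.s_inv g)) := by
    rw [Gr.r_mul, h1, Gr.r_inv]
  have hc2 : Gr.s (Gr.inv (Gr.inv g)) = Gr.r (Gr.inv g) := Gr.s_inv _
  have step1 : Gr.inv (Gr.inv g) =
      Gr.mul (Gr.inv (Gr.inv g)) (Gr.mul (Gr.inv g) g (Gr.s_inv g)) hc1 := by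
    conv_lhs => rw [← e1]
    exact Gr.mul_congr rfl e2 _ _
  have step2 : Gr.mul (Gr.inv (Gr.inv g)) (Gr.mul (Gr.inv g) g (Gr.s_inv g)) hc1 =
      Gr.mul (Gr.mul (Gr.inv (Gr.inv g)) (Gr.inv g) hc2) g
        ((Gr.s_mul _ _ hc2).trans (Gr.s_inv g)) :=
    (Gr.mul_assoc _ _ _ hc2 (Gr.s_inv g)).symm
  have step3 : Gr.mul (Gr.inv (Gr.inv g)) (Gr.inv g) hc2 = Gr.unit (Gr.r g) := by
    refine (Gr.inv_mul (Gr.inv g) hc2).trans ?_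
    rw [Gr.s_inv]
  have step4 : Gr.mul (Gr.mul (Gr.inv (Gr.inv g)) (Gr.inv g) hc2) g
      ((Gr.s_mul _ _ hc2).trans (Gr.s_inv g)) = Gr.mul (Gr.unit (Gr.r g)) g
        (by rw [Gr.s_unit]) :=
    Gr.mul_congr step3 rfl _ _
  rw [step1, step2, step4]
  exact Gr.unit_mul g _

theorem TopGroupoid.GSpace.act_congr {Gr : TopGroupoid X G} (Sp : Gr.GSpace Y) {g g' : G}
    (hg : g = g') (y : Y) (h : Gr.s g = Sp.p y) (h' : Gr.s g' = Sp.p y) :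
    Sp.act g y h = Sp.act g' y h' := by subst hg; rfl

/-- In a locally compact Hausdorff totally disconnected space, every point of an open set
has a compact open neighborhood inside it. -/
theorem exists_isCompact_isOpen_nbhd [T2Space X] [LocallyCompactSpace X]
    (htd : TotallyDisconnectedSpace X) {x : X} {U : Set X} (hU : IsOpen U) (hx : x ∈ U) :
    ∃ V : Set X, IsCompact V ∧ IsOpen V ∧ x ∈ V ∧ V ⊆ U := by
  obtain ⟨K, hK, hxK, hKU⟩ := exists_compact_subset hU hx
  obtain ⟨V, hV, hxV, hVK⟩ :=
    (loc_compact_Haus_tot_disc_of_zero_dim (H := X)).mem_nhds_iff.1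
      (isOpen_interior.mem_nhds hxK)
  exact ⟨V, hK.of_isClosed_subset hV.1 (hVK.trans interior_subset), hV.2, hxV,
    (hVK.trans interior_subset).trans hKU⟩

/-- Slice lemma: around any point of an étale space over a locally compact Hausdorff
totally disconnected base there is a compact open slice, inside a prescribed open set,
on which a given continuous integer-valued function is constant, together with a
continuous section over its (open) image. -/
theorem exists_slice [T2Space X] [LocallyCompactSpace X]
    (htd : TotallyDisconnectedSpace X) {p : Y → X} (hp : IsLocalHomeomorph p)
    (m : Y → ℤ) (hm : Continuous m) {O : Set Y} (hO : IsOpen O) {y : Y} (hyO : y ∈ O) :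
    ∃ (V : Set Y) (σ : X → Y), IsCompact V ∧ IsOpen V ∧ y ∈ V ∧ V ⊆ O ∧
      Set.InjOn p V ∧ IsOpen (p '' V) ∧
      (∀ x' ∈ p '' V, σ x' ∈ V ∧ p (σ x') = x') ∧
      (∀ y' ∈ V, m y' = m y) ∧ (∀ y' ∈ V, σ (p y') = y') := by
  obtain ⟨e, hye, rfl⟩ := hp y
  set W : Set Y := e.source ∩ O ∩ m ⁻¹' {m y} with hW
  have hWo : IsOpen W := ((e.open_source.inter hO).inter (hm.isOpen_preimage _
    (isOpen_discrete _)))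
  have hyW : y ∈ W := ⟨⟨hye, hyO⟩, rfl⟩
  have hpW : IsOpen ((e : Y → X) '' W) := hp.isOpenMap W hWo
  obtain ⟨K, hKc, hKo, hxK, hKW⟩ := exists_isCompact_isOpen_nbhd htd hpW
    ⟨y, hyW, rfl⟩
  have hKt : K ⊆ e.target := by
    refine hKW.trans ?_
    rw [← e.image_source_eq_target]
    exact Set.image_mono (fun z hz => hz.1.1)
  set V : Set Y := W ∩ (e : Y → X) ⁻¹' K with hV
  have hsub1 : e.symm '' K ⊆ V := by
    rintro _ ⟨k, hk, rfl⟩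
    obtain ⟨w, hwW, hwk⟩ := hKW hk
    have : e.symm k = w := by rw [← hwk, e.left_inv hwW.1.1]
    rw [this]
    exact ⟨hwW, by simp only [Set.mem_preimage, hwk]; exact hk⟩
  have hsub2 : V ⊆ e.symm '' K := by
    rintro v ⟨hvW, hvK⟩
    exact ⟨e v, hvK, e.left_inv hvW.1.1⟩
  have hVeq : V = e.symm '' K := le_antisymm hsub2 hsub1
  have hVc : IsCompact V := by
    rw [hVeq]
    exact hKc.image_of_continuousOn (e.continuousOn_symm.mono hKt)
  have hVo : IsOpen V := by
    have : V = W ∩ (e.source ∩ (e : Y → X) ⁻¹' K) := by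
      rw [hV]
      ext v
      constructor
      · rintro ⟨hvW, hvK⟩; exact ⟨hvW, hvW.1.1, hvK⟩
      · rintro ⟨hvW, _, hvK⟩; exact ⟨hvW, hvK⟩
    rw [this]
    exact hWo.inter (e.isOpen_inter_preimage hKo)
  have hyV : y ∈ V := ⟨hyW, hxK⟩
  have hVW : V ⊆ W := Set.inter_subset_left
  have hinj : Set.InjOn (e : Y → X) V := e.injOn.mono fun v hv => hv.1.1.1
  have himg : (e : Y → X) '' V = K := by
    apply le_antisymm
    · rintro _ ⟨v, hv, rfl⟩; exact hv.2
    · intro k hk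
      refine ⟨e.symm k, hsub1 ⟨k, hk, rfl⟩, e.right_inv (hKt hk)⟩
  refine ⟨V, fun x' => e.symm x', hVc, hVo, hyV, fun v hv => (hVW hv).1.2, hinj,
    by rw [himg]; exact hKo, ?_, fun y' hy' => (hVW hy').2, fun y' hy' => e.left_inv (hVW hy').1.1⟩
  intro x' hx'
  rw [himg] at hx'
  exact ⟨hsub1 ⟨x', hx', rfl⟩, e.right_inv (hKt hx')⟩

/-- The fiber-supported part of a compactly supported function is finite. -/
theorem fiber_finite [T1Space X] {p : Y → X} (hp : IsLocalHomeomorph p)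
    (m : Y → ℤ) (hm : HasCompactSupport m) (x : X) :
    {y : Y | p y = x ∧ m y ≠ 0}.Finite := by
  set S := {y : Y | p y = x ∧ m y ≠ 0} with hS
  have hST : S ⊆ tsupport m ∩ p ⁻¹' {x} := fun y hy =>
    ⟨subset_tsupport m hy.2, hy.1⟩
  have hT : IsCompact (tsupport m ∩ p ⁻¹' {x}) :=
    hm.inter_right (IsClosed.preimage hp.continuous isClosed_singleton)
  choose e he hpe using hp
  obtain ⟨F, hF⟩ := hT.elim_finite_subcover (fun y : Y => (e y).source)
    (fun y => (e y).open_source) (fun z hz => Set.mem_iUnion.2 ⟨z, he z⟩)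
  have hsub : S ⊆ ⋃ y ∈ F, ((e y).source ∩ S) := by
    intro z hz
    obtain ⟨w, hwF, hw⟩ := Set.mem_iUnion₂.1 (hF (hST hz))
    exact Set.mem_iUnion₂.2 ⟨w, hwF, hw, hz⟩
  refine Set.Finite.subset (Set.Finite.biUnion F.finite_toSet fun w _ => ?_) hsub
  apply Set.Subsingleton.finite
  intro a ha b hb
  have hinj : Set.InjOn p (e w).source := by
    rw [hpe w]; exact (e w).injOn
  exact hinj ha.1 hb.1 (ha.2.1.trans hb.2.1.symm)

/-- The section `Φ(m)(x) = Σ_{p(y)=x} m(y)[y]` as a finitely supported function. -/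
noncomputable def phiSec (p : Y → X) (m : Y → ℤ)
    (hfin : ∀ x : X, {y : Y | p y = x ∧ m y ≠ 0}.Finite) (x : X) : Y →₀ ℤ where
  support := (hfin x).toFinset
  toFun := fun y => if p y = x then m y else 0
  mem_support_toFun := by
    intro y
    rw [Set.Finite.mem_toFinset]
    by_cases h : p y = x <;> simp [h]

theorem phiSec_apply (p : Y → X) (m : Y → ℤ)
    (hfin : ∀ x : X, {y : Y | p y = x ∧ m y ≠ 0}.Finite) (x : X) (y : Y) :
    phiSec p m hfin x y = if p y = x then m y else 0 := rfl

/-- `phiSec` of a compactly supported continuous function is a compactly supported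
continuous section of the sheaf `ℤ[Y]^s`. -/
theorem freeSection_phiSec [T2Space X] [LocallyCompactSpace X] [T2Space Y]
    {Gr : TopGroupoid X G} (htd : TotallyDisconnectedSpace X)
    (Sp : Gr.GSpace Y) (hSp : Sp.IsEtaleSpace) (m : C_c(Y, ℤ))
    (hfin : ∀ x : X, {y : Y | Sp.p y = x ∧ (m : Y → ℤ) y ≠ 0}.Finite) :
    FreeSection Sp (phiSec Sp.p m hfin) := by
  refine ⟨?_, ?_, ?_⟩
  · -- support lies in the fiber
    intro x y hy
    by_contra h
    exact Finsupp.mem_support_iff.1 hy (by rw [phiSec_apply, if_neg h])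
  · -- local structure
    intro x
    set S : Finset Y := (hfin x).toFinset with hSdef
    set k := S.card with hk
    set ι : Fin k ≃ {z // z ∈ S} := S.equivFin.symm with hι
    set pt : Fin k → Y := fun i => (ι i : Y) with hpt
    have hptS : ∀ i, Sp.p (pt i) = x ∧ (m : Y → ℤ) (pt i) ≠ 0 := by
      intro i
      exact (Set.Finite.mem_toFinset (hfin x)).1 (ι i).2
    have hptinj : Function.Injective pt := fun i j hij =>
      ι.injective (Subtype.ext hij)
    -- pairwise disjoint open neighborhoods
    obtain ⟨O, hO, hOd⟩ := Set.Finite.t2_separation (S : Set Y).toFinite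
    -- slices
    have hslice : ∀ i : Fin k, ∃ (V : Set Y) (σ : X → Y),
        IsCompact V ∧ IsOpen V ∧ pt i ∈ V ∧ V ⊆ O (pt i) ∧
        Set.InjOn Sp.p V ∧ IsOpen (Sp.p '' V) ∧
        (∀ x' ∈ Sp.p '' V, σ x' ∈ V ∧ Sp.p (σ x') = x') ∧
        (∀ y' ∈ V, (m : Y → ℤ) y' = m (pt i)) ∧ (∀ y' ∈ V, σ (Sp.p y') = y') :=
      fun i => exists_slice htd hSp (m : Y → ℤ) m.continuous (hO (pt i)).2 (hO (pt i)).1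
    choose V σ hVc hVo hptV hVO hVinj hpVo hσ hconst hsec using hslice
    -- slices are pairwise disjoint
    have hdisj : ∀ i j : Fin k, ∀ z : Y, z ∈ V i → z ∈ V j → i = j := by
      intro i j z hzi hzj
      by_contra hij
      have hpts : pt i ≠ pt j := fun h => hij (hptinj h)
      have := hOd (ι i).2 (ι j).2 hpts
      exact Set.disjoint_left.1 this (hVO i hzi) (hVO j hzj)
    -- the support of m (clopen, compact)
    set C : Set Y := Function.support (m : Y → ℤ) with hC
    have hCclosed : IsClosed C := by
      have : C = (m : Y → ℤ) ⁻¹' ({0}ᶜ) := rfl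
      rw [this]
      exact IsClosed.preimage m.continuous (isClosed_discrete _)
    have hCcomp : IsCompact C :=
      m.hasCompactSupport'.of_isClosed_subset hCclosed (subset_tsupport _)
    set D : Set Y := C \ ⋃ i, V i with hD
    have hDcomp : IsCompact D :=
      hCcomp.of_isClosed_subset (hCclosed.sdiff (isOpen_iUnion hVo)) Set.diff_subset
    have hpDclosed : IsClosed (Sp.p '' D) :=
      (hDcomp.image Sp.continuous_p).isClosed
    set U : Set X := (⋂ i, Sp.p '' V i) ∩ (Sp.p '' D)ᶜ with hU
    have hUo : IsOpen U :=
      (isOpen_iInter_of_finite hpVo).inter hpDclosed.isOpen_compl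
    have hmemS : ∀ z : Y, Sp.p z = x → (m : Y → ℤ) z ≠ 0 → ∃ i, z = pt i := by
      intro z hz hmz
      have hzS : z ∈ S := (Set.Finite.mem_toFinset (hfin x)).2 ⟨hz, hmz⟩
      exact ⟨ι.symm ⟨z, hzS⟩, by simp [hpt]⟩
    have hxU : x ∈ U := by
      constructor
      · exact Set.mem_iInter.2 fun i => ⟨pt i, hptV i, (hptS i).1⟩
      · rintro ⟨z, ⟨hzC, hzV⟩, hzx⟩
        obtain ⟨i, rfl⟩ := hmemS z hzx hzC
        exact hzV (Set.mem_iUnion.2 ⟨i, hptV i⟩)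
    refine ⟨U, hUo, hxU, k, V, fun i => m (pt i), σ, ?_, ?_, ?_⟩
    · exact fun i => ⟨hVc i, hVo i, hVinj i,
        (Set.inter_subset_left.trans (Set.iInter_subset _ i))⟩
    · intro i x' hx'
      exact hσ i x' (Set.mem_iInter.1 hx'.1 i)
    · intro x' hx'
      apply Finsupp.ext
      intro z
      rw [phiSec_apply]
      have hsum : (∑ i, m (pt i) • Finsupp.single (σ i x') 1) z =
          ∑ i, if σ i x' = z then m (pt i) else 0 := by
        rw [Finsupp.finset_sum_apply]
        refine Finset.sum_congr rfl fun i _ => ?_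
        rw [Finsupp.smul_apply, Finsupp.single_apply]
        by_cases h : σ i x' = z <;> simp [h]
      rw [hsum]
      have hx'V : ∀ i, x' ∈ Sp.p '' V i := fun i => Set.mem_iInter.1 hx'.1 i
      by_cases hz : ∃ j, σ j x' = z
      · obtain ⟨j, hj⟩ := hz
        have hzVj : z ∈ V j := hj ▸ (hσ j x' (hx'V j)).1
        rw [Finset.sum_eq_single j]
        · have hpz : Sp.p z = x' := hj ▸ (hσ j x' (hx'V j)).2
          rw [if_pos hj, if_pos hpz]
          exact hconst j z hzVj
        · intro i _ hij
          rw [if_neg]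
          intro hi
          exact hij (hdisj i j z (hi ▸ (hσ i x' (hx'V i)).1) hzVj)
        · intro h; exact absurd (Finset.mem_univ j) h
      · push_neg at hz
        rw [Finset.sum_eq_zero fun i _ => if_neg (hz i)]
        by_cases hpz : Sp.p z = x'
        · rw [if_pos hpz]
          by_contra hmz
          have hzC : z ∈ C := hmz
          have hzV : z ∉ ⋃ i, V i := by
            intro hmem
            obtain ⟨i, hi⟩ := Set.mem_iUnion.1 hmem
            exact hz i (by rw [← hpz]; exact hsec i z hi)
          exact hx'.2 ⟨z, ⟨hzC, hzV⟩, hpz⟩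
        · rw [if_neg hpz]
  · -- compact support
    refine ⟨Sp.p '' tsupport (m : Y → ℤ),
      m.hasCompactSupport'.image Sp.continuous_p, ?_⟩
    intro x hx
    apply Finsupp.ext
    intro z
    rw [phiSec_apply, Finsupp.coe_zero, Pi.zero_apply]
    by_cases hz : Sp.p z = x
    · rw [if_pos hz]
      by_contra hmz
      exact hx ⟨z, subset_tsupport _ hmz, hz⟩
    · rw [if_neg hz]

/-- Every compactly supported continuous section of `ℤ[Y]^s` comes from a compactly
supported continuous function on `Y`. -/
theorem exists_preimage_of_freeSection [T2Space X] [T2Space Y]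
    {Gr : TopGroupoid X G} (Sp : Gr.GSpace Y)
    (ξ : X → (Y →₀ ℤ)) (hξ : FreeSection Sp ξ) :
    ∃ m : C_c(Y, ℤ), ∀ y : Y, m y = ξ (Sp.p y) y := by
  classical
  set m0 : Y → ℤ := fun y => ξ (Sp.p y) y with hm0
  -- m0 is locally constant
  have hlc : IsLocallyConstant m0 := by
    rw [IsLocallyConstant.iff_exists_open]
    intro y
    obtain ⟨U, hUo, hxU, k, V, a, σ, hV, hσ, hsum⟩ := hξ.2.1 (Sp.p y)
    set N : Set Y := Sp.p ⁻¹' U ∩ ⋂ i : Fin k, (if y ∈ V i then V i else (V i)ᶜ) with hN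
    have hNo : IsOpen N := by
      refine (hUo.preimage Sp.continuous_p).inter (isOpen_iInter_of_finite fun i => ?_)
      by_cases h : y ∈ V i
      · rw [if_pos h]; exact (hV i).2.1
      · rw [if_neg h]; exact ((hV i).1.isClosed).isOpen_compl
    have hyN : y ∈ N := by
      refine ⟨hxU, Set.mem_iInter.2 fun i => ?_⟩
      by_cases h : y ∈ V i
      · rw [if_pos h]; exact h
      · rw [if_neg h]; exact h
    refine ⟨N, hNo, hyN, ?_⟩
    have key : ∀ y' ∈ N, m0 y' = ∑ i, if y ∈ V i then a i else 0 := by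
      intro y' hy'
      have hpy' : Sp.p y' ∈ U := hy'.1
      have hval : ∀ i : Fin k, (σ i (Sp.p y') = y') ↔ y ∈ V i := by
        intro i
        have hσi := hσ i (Sp.p y') hpy'
        have hy'i := Set.mem_iInter.1 hy'.2 i
        constructor
        · intro h
          by_contra hyVi
          rw [if_neg hyVi] at hy'i
          exact hy'i (h ▸ hσi.1)
        · intro hyVi
          rw [if_pos hyVi] at hy'i
          exact (hV i).2.2.1 hσi.1 hy'i hσi.2
      calc m0 y' = ξ (Sp.p y') y' := rfl
        _ = (∑ i, a i • Finsupp.single (σ i (Sp.p y')) 1) y' := by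
              rw [hsum (Sp.p y') hpy']
        _ = ∑ i, if σ i (Sp.p y') = y' then a i else 0 := by
              rw [Finsupp.finset_sum_apply]
              refine Finset.sum_congr rfl fun i _ => ?_
              rw [Finsupp.smul_apply, Finsupp.single_apply]
              by_cases h : σ i (Sp.p y') = y' <;> simp [h]
        _ = ∑ i, if y ∈ V i then a i else 0 := by
              refine Finset.sum_congr rfl fun i _ => ?_
              by_cases h : y ∈ V i
              · rw [if_pos h, if_pos ((hval i).2 h)]
              · rw [if_neg h, if_neg (fun hc => h ((hval i).1 hc))]
    intro y' hy'
    rw [key y' hy', key y hyN]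
  -- m0 has compact support
  obtain ⟨K, hKc, hK0⟩ := hξ.2.2
  have hcover : ∀ x : X, ∃ U : Set X, IsOpen U ∧ x ∈ U ∧ ∃ C : Set Y, IsCompact C ∧
      ∀ x' ∈ U, ∀ z : Y, ξ x' z ≠ 0 → z ∈ C := by
    intro x
    obtain ⟨U, hUo, hxU, k, V, a, σ, hV, hσ, hsum⟩ := hξ.2.1 x
    refine ⟨U, hUo, hxU, ⋃ i, V i, isCompact_iUnion fun i => (hV i).1, ?_⟩
    intro x' hx' z hz
    rw [hsum x' hx'] at hz
    rw [Finsupp.finset_sum_apply] at hz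
    obtain ⟨i, _, hi⟩ := Finset.exists_ne_zero_of_sum_ne_zero hz
    rw [Finsupp.smul_apply, Finsupp.single_apply] at hi
    have : σ i x' = z := by
      by_contra h
      rw [if_neg h] at hi
      simp at hi
    exact Set.mem_iUnion.2 ⟨i, this ▸ (hσ i x' hx').1⟩
  choose U hUo hxU C hCc hC using hcover
  obtain ⟨t, ht⟩ := hKc.elim_finite_subcover U hUo
    (fun x hx => Set.mem_iUnion.2 ⟨x, hxU x⟩)
  have hsupp : Function.support m0 ⊆ ⋃ x ∈ t, C x := by
    intro y hy
    have hpK : Sp.p y ∈ K := by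
      by_contra h
      exact hy (by rw [hm0]; simp [hK0 _ h])
    obtain ⟨x₀, hx₀t, hx₀⟩ := Set.mem_iUnion₂.1 (ht hpK)
    exact Set.mem_iUnion₂.2 ⟨x₀, hx₀t, hC x₀ (Sp.p y) hx₀ y hy⟩
  have hCU : IsCompact (⋃ x ∈ t, C x) :=
    t.finite_toSet.isCompact_biUnion fun x _ => hCc x
  have hcs : HasCompactSupport m0 := HasCompactSupport.of_support_subset_isCompact hCU hsupp
  exact ⟨⟨⟨m0, hlc.continuous⟩, hcs⟩, fun y => rfl⟩

end AuxLemmas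


/-- (Lemma `lem:isom_gamma_n`.)  Let `G` be an ample groupoid and
`p : Y → G^(0)` an étale `G`-space, and let `ℤ[Y]^s` be the `G`-sheaf whose stalk at `x` is the
free abelian group on the fiber `Y_x`.  Then `Φ : ℤ[Y] → Γ_c(ℤ[Y]^s)`,
`Φ(m)(x) = Σ_{p(y)=x} m(y)[y]`, is an isomorphism of `ℤ[G]`-modules, with inverse sending a
section `ξ`, `ξ(x) = Σ a_y [y]`, to the function `y ↦ a_y`. -/
theorem statement7 {X G Y : Type*} [TopologicalSpace X] [TopologicalSpace G]
    [TopologicalSpace Y] [T2Space X] [LocallyCompactSpace X]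
    [T2Space G] [LocallyCompactSpace G] [T2Space Y] [LocallyCompactSpace Y]
    (Gr : TopGroupoid X G) (hGr : Gr.IsAmple)
    (Sp : Gr.GSpace Y) (hSp : Sp.IsEtaleSpace)
    (smul : C_c(G, ℤ) → C_c(Y, ℤ) → C_c(Y, ℤ)) (hsmul : Sp.SmulSpec smul) :
    ∃ Φ : C_c(Y, ℤ) → {ξ : X → (Y →₀ ℤ) // FreeSection Sp ξ},
      -- the defining formula `Φ(m)(x) = Σ_{p(y)=x} m(y)[y]`
      (∀ (m : C_c(Y, ℤ)) (x : X) (y : Y),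
        (Φ m).1 x y = if Sp.p y = x then m y else 0) ∧
      Function.Bijective Φ ∧
      -- `Φ` is additive
      (∀ m₁ m₂ : C_c(Y, ℤ), ∀ x, (Φ (m₁ + m₂)).1 x = (Φ m₁).1 x + (Φ m₂).1 x) ∧
      -- `Φ` intertwines the `ℤ[G]`-module structures:
      -- `Φ(f·m)(x) = Σ_{r(g)=x} f(g) (g · Φ(m)(s(g)))`
      (∀ (f : C_c(G, ℤ)) (m : C_c(Y, ℤ)) (x : X) (y : Y) (hy : Sp.p y = x),
        (Φ (smul f m)).1 x y =
          ∑ᶠ g : {g : G // Gr.r g = x},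
            f g.1 * (Φ m).1 (Gr.s g.1)
              (Sp.act (Gr.inv g.1) y ((Gr.s_inv g.1).trans (g.2.trans hy.symm)))) ∧
      -- the inverse sends a section `ξ` to `y ↦` (coefficient of `[y]` in `ξ(p(y))`)
      (∀ (m : C_c(Y, ℤ)) (ξ : {ξ : X → (Y →₀ ℤ) // FreeSection Sp ξ}),
        Φ m = ξ ↔ ∀ y : Y, m y = ξ.1 (Sp.p y) y) := by
  classical
  obtain ⟨hEt, htd⟩ := hGr
  have hfin : ∀ (m : C_c(Y, ℤ)) (x : X), {y : Y | Sp.p y = x ∧ (m : Y → ℤ) y ≠ 0}.Finite :=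
    fun m x => fiber_finite hSp (m : Y → ℤ) m.hasCompactSupport' x
  set Φ : C_c(Y, ℤ) → {ξ : X → (Y →₀ ℤ) // FreeSection Sp ξ} :=
    fun m => ⟨phiSec Sp.p m (hfin m), freeSection_phiSec htd Sp hSp m (hfin m)⟩ with hΦ
  have hformula : ∀ (m : C_c(Y, ℤ)) (x : X) (y : Y),
      (Φ m).1 x y = if Sp.p y = x then m y else 0 := fun m x y => rfl
  have key : ∀ (m : C_c(Y, ℤ)) (ξ : {ξ : X → (Y →₀ ℤ) // FreeSection Sp ξ}),
      Φ m = ξ ↔ ∀ y : Y, m y = ξ.1 (Sp.p y) y := by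
    intro m ξ
    constructor
    · rintro rfl y
      rw [hformula m (Sp.p y) y, if_pos rfl]
    · intro h
      apply Subtype.ext
      funext x
      apply Finsupp.ext
      intro z
      rw [hformula]
      by_cases hz : Sp.p z = x
      · rw [if_pos hz, h z, hz]
      · rw [if_neg hz]
        symm
        by_contra h0
        exact hz (ξ.2.1 x z (Finsupp.mem_support_iff.2 h0))
  have hinj : Function.Injective Φ := by
    intro m₁ m₂ h
    apply CompactlySupportedContinuousMap.ext
    intro y
    have h1 := (key m₁ (Φ m₂)).1 h y
    have h2 := (key m₂ (Φ m₂)).1 rfl y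
    rw [h1, ← h2]
  have hsurj : Function.Surjective Φ := by
    intro ξ
    obtain ⟨m, hm⟩ := exists_preimage_of_freeSection Sp ξ.1 ξ.2
    exact ⟨m, (key m ξ).2 hm⟩
  refine ⟨Φ, hformula, ⟨hinj, hsurj⟩, ?_, ?_, key⟩
  · intro m₁ m₂ x
    apply Finsupp.ext
    intro z
    rw [Finsupp.add_apply, hformula, hformula, hformula]
    by_cases hz : Sp.p z = x
    · simp [hz]
    · simp [hz]
  · intro f m x y hy
    rw [hformula, if_pos hy, hsmul f m y]
    have hrw : (∑ᶠ g : {g : G // Gr.r g = x},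
        f g.1 * (Φ m).1 (Gr.s g.1)
          (Sp.act (Gr.inv g.1) y ((Gr.s_inv g.1).trans (g.2.trans hy.symm)))) =
        ∑ᶠ g : {g : G // Gr.r g = x},
          f g.1 * m (Sp.act (Gr.inv g.1) y ((Gr.s_inv g.1).trans (g.2.trans hy.symm))) := by
      refine finsum_congr fun g => ?_
      rw [hformula, if_pos]
      rw [Sp.p_act, Gr.r_inv]
    rw [hrw]
    refine finsum_eq_of_bijective
      (fun a : {g : G // Gr.s g = Sp.p y} =>
        (⟨Gr.inv a.1, by rw [Gr.r_inv]; exact a.2.trans hy⟩ : {g : G // Gr.r g = x}))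
      ⟨?_, ?_⟩ ?_
    · intro a b hab
      apply Subtype.ext
      have := congrArg (fun c : {g : G // Gr.r g = x} => Gr.inv c.1) hab
      simpa [Gr.inv_inv] using this
    · intro b
      refine ⟨⟨Gr.inv b.1, by rw [Gr.s_inv]; exact b.2.trans hy.symm⟩, Subtype.ext ?_⟩
      simp [Gr.inv_inv]
    · intro a
      congr 1
      exact congrArg m (Sp.act_congr (Gr.inv_inv a.1).symm y a.2 _)
end

section
/- Let X = {1,...,p}^N with the shift σ and σ* : C(X,Z) → C(X,Z), σ*(f) = f ∘ σ. Then the inverse limit of the tower ⋯ →^{σ*} C(X,Z) →^{σ*} C(X,Z) is isomorphic to Z, consisting exactly of the constant functions. Consequently H^0(F_p, Z) ≅ Z for the UHF(p^∞) groupoid F_p. -/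
/-- The inverse limit of the tower `⋯ →^{σ*} C(X,ℤ) →^{σ*} C(X,ℤ)`, `σ*(f) = f ∘ σ`,
realized as the subgroup of compatible sequences `(f_n)` with `f_n = f_{n+1} ∘ σ`. -/
noncomputable def invLimSub {X : Type*} [TopologicalSpace X] (σ : X → X) :
    AddSubgroup (ℕ → C(X, ℤ)) where
  carrier := {F | ∀ n x, F n x = F (n + 1) (σ x)}
  zero_mem' := by intro n x; simp
  add_mem' := by
    intro a b ha hb n x
    simp [ha n x, hb n x]
  neg_mem' := by
    intro a ha n x
    simp [ha n x]

lemma invLim_iterate {X : Type*} [TopologicalSpace X] {σ : X → X}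
    {F : ℕ → C(X, ℤ)} (hF : F ∈ invLimSub σ) (n k : ℕ) (x : X) :
    F n x = F (n + k) (σ^[k] x) := by
  induction k with
  | zero => simp
  | succ k ih =>
    rw [ih, hF (n + k) (σ^[k] x), Function.iterate_succ_apply']
    ring_nf

lemma shift_iterate {p : ℕ} (σ : (ℕ → Fin p) → (ℕ → Fin p))
    (hσ : ∀ x n, σ x n = x (n + 1)) (k : ℕ) (x : ℕ → Fin p) (m : ℕ) :
    σ^[k] x m = x (m + k) := by
  induction k generalizing x with
  | zero => simp
  | succ k ih =>
    rw [Function.iterate_succ_apply, ih, hσ]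
    ring_nf

lemma invLim_const {p : ℕ} {σ : (ℕ → Fin p) → (ℕ → Fin p)}
    (hσ : ∀ x n, σ x n = x (n + 1))
    {F : ℕ → C(ℕ → Fin p, ℤ)} (hF : F ∈ invLimSub σ) (n : ℕ) (x y : ℕ → Fin p) :
    F n x = F n y := by
  set u : ℕ → (ℕ → Fin p) := fun k m => if m < k then x m else y m with hu
  have hconst : ∀ k, F n (u k) = F n y := by
    intro k
    have h1 : σ^[k] (u k) = σ^[k] y := by
      funext m
      rw [shift_iterate σ hσ, shift_iterate σ hσ]
      simp [hu]
    rw [invLim_iterate hF n k (u k), h1, ← invLim_iterate hF n k y]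
  have htend : Filter.Tendsto u Filter.atTop (nhds x) := by
    rw [tendsto_pi_nhds]
    intro m
    apply Filter.Tendsto.congr' (f₁ := fun _ => x m)
    · filter_upwards [Filter.eventually_gt_atTop m] with k hk
      simp [hu, hk]
    · exact tendsto_const_nhds
  have h2 : Filter.Tendsto (fun k => F n (u k)) Filter.atTop (nhds (F n x)) :=
    ((F n).continuous.tendsto x).comp htend
  have h3 : Filter.Tendsto (fun k => F n (u k)) Filter.atTop (nhds (F n y)) := by
    simp only [hconst]; exact tendsto_const_nhds
  exact tendsto_nhds_unique h2 h3

lemma invLim_const' {p : ℕ} {σ : (ℕ → Fin p) → (ℕ → Fin p)}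
    (hσ : ∀ x n, σ x n = x (n + 1))
    {F : ℕ → C(ℕ → Fin p, ℤ)} (hF : F ∈ invLimSub σ) (n : ℕ) (x y : ℕ → Fin p) :
    F n x = F 0 y := by
  have h := invLim_iterate hF 0 n y
  rw [zero_add] at h
  rw [invLim_const hσ hF n x (σ^[n] y), ← h]

/-- Let `X = {1,…,p}^ℕ` with the shift `σ` and `σ* : C(X,ℤ) → C(X,ℤ)`,
`σ*(f) = f ∘ σ`.  Then the inverse limit of the tower `⋯ →^{σ*} C(X,ℤ) →^{σ*} C(X,ℤ)` is
isomorphic to `ℤ`, and consists exactly of the constant sequences of constant functions.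
Consequently `H^0(F_p, ℤ) ≅ ℤ` for the `UHF(p^∞)` groupoid `F_p`:  any group realizing the
inverse limit (via compatible projections with the universal property) is isomorphic to `ℤ`. -/
theorem statement17 (p : ℕ) (hp : 2 ≤ p)
    (σ : (ℕ → Fin p) → (ℕ → Fin p)) (hσ : ∀ x n, σ x n = x (n + 1)) :
    -- every compatible sequence consists of constant functions
    (∀ F ∈ invLimSub σ, ∀ n, ∃ c : ℤ, ∀ x, F n x = c) ∧
    -- the inverse limit is isomorphic to `ℤ`
    Nonempty (↥(invLimSub σ) ≃+ ℤ) ∧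
    -- hence any realization of `H^0(F_p, ℤ) = lim← (C(X,ℤ), σ*)` is isomorphic to `ℤ`
    (∀ (H : Type) (_ : AddCommGroup H) (π : ℕ → (H →+ C(ℕ → Fin p, ℤ))),
      (∀ n h x, π n h x = π (n + 1) h (σ x)) →
      (∀ F ∈ invLimSub σ, ∃! h : H, ∀ n, π n h = F n) →
      Nonempty (H ≃+ ℤ)) := by
  have hp0 : 0 < p := by omega
  set x₀ : ℕ → Fin p := fun _ => ⟨0, hp0⟩ with hx₀
  -- the evaluation hom
  let φ : ↥(invLimSub σ) →+ ℤ :=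
    { toFun := fun F => F.1 0 x₀
      map_zero' := rfl
      map_add' := fun a b => rfl }
  have hφbij : Function.Bijective φ := by
    constructor
    · intro a b hab
      apply Subtype.ext
      funext n
      ext x
      rw [invLim_const' hσ a.2 n x x₀, invLim_const' hσ b.2 n x x₀]
      exact hab
    · intro c
      refine ⟨⟨fun _ => ContinuousMap.const _ c, fun n x => rfl⟩, rfl⟩
  have e : ↥(invLimSub σ) ≃+ ℤ := AddEquiv.ofBijective φ hφbij
  refine ⟨?_, ⟨e⟩, ?_⟩
  · intro F hF n
    exact ⟨F 0 x₀, fun x => invLim_const' hσ hF n x x₀⟩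
  · intro H _ π hcompat huniv
    let Φ : H →+ ↥(invLimSub σ) :=
      { toFun := fun h => ⟨fun n => π n h, fun n x => hcompat n h x⟩
        map_zero' := by
          apply Subtype.ext; funext n; simp
        map_add' := fun a b => by
          apply Subtype.ext; funext n; simp }
    have hΦbij : Function.Bijective Φ := by
      constructor
      · intro a b hab
        obtain ⟨h, hh, hhuniq⟩ := huniv (fun n => π n a) (fun n x => hcompat n a x)
        have ha : a = h := hhuniq a (fun n => rfl)
        have hb : b = h := hhuniq b (fun n => by
          have := congrArg Subtype.val hab
          exact (congrFun this n).symm)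
        rw [ha, hb]
      · intro F
        obtain ⟨h, hh, -⟩ := huniv F.1 F.2
        exact ⟨h, Subtype.ext (funext hh)⟩
    exact ⟨(AddEquiv.ofBijective Φ hΦbij).trans e⟩
end
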